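/- arXiv:2205.01993 — 2 statements merged into one kernel-verified Lean document; each statement's English description precedes it below -/
import Mathlib

section
/- Let Ω be a domain in ℍ and f ∈ USC(Ω) be locally bounded. Let 𝒜 be a family of viscosity subsolutions of u + H(p,u,∇_H u) = f in Ω and define v(p) = sup{u(p) : u ∈ 𝒜} for p ∈ Ω. If v is locally bounded, then its upper semicontinuous envelope v* is a viscosity subsolution of u + H(p,u,∇_H u) = f in Ω. -/
noncomputable section

/-- The underlying space of the first Heisenberg group: `ℝ³`. -/
abbrev Heis := ℝ × ℝ × ℝ

/-- Heisenberg group multiplication. -/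
def hmul (p q : Heis) : Heis :=
  (p.1 + q.1, p.2.1 + q.2.1, p.2.2 + q.2.2 + (p.1 * q.2.1 - q.1 * p.2.1) / 2)

/-- Heisenberg group inverse. -/
def hinv (p : Heis) : Heis := (-p.1, -p.2.1, -p.2.2)

/-- The horizontal plane `ℍ_p = p · ℍ₀` through `p`. -/
def hplane (p : Heis) : Set Heis := {q | ∃ h : Heis, h.2.2 = 0 ∧ q = hmul p h}

/-- The (Euclidean) segment `[p,q]`. -/
def hseg (p q : Heis) : Set Heis :=
  {w | ∃ l : ℝ, 0 ≤ l ∧ l ≤ 1 ∧ w = (1 - l) • p + l • q}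

/-- The half-open segment `(p,q]`. -/
def hsegHalfOpen (p q : Heis) : Set Heis :=
  {w | ∃ l : ℝ, 0 < l ∧ l ≤ 1 ∧ w = (1 - l) • p + l • q}

/-- A set `E ⊆ ℍ` is h-convex if for every `p ∈ E` and `q ∈ ℍ_p ∩ E`,
the horizontal segment `[p,q]` lies in `E`. -/
def IsHConvex (E : Set Heis) : Prop :=
  ∀ p ∈ E, ∀ q ∈ hplane p, q ∈ E → ∀ w ∈ hseg p q, w ∈ E

/-- A set `E` is h-convex up to boundary if for every `p ∈ ∂E` and `q ∈ ℍ_p ∩ E`,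
the half-open segment `(p,q]` lies in `E`. -/
def IsHConvexUpToBoundary (E : Set Heis) : Prop :=
  ∀ p ∈ frontier E, ∀ q ∈ hplane p, q ∈ E → ∀ w ∈ hsegHalfOpen p q, w ∈ E

/-- A function `u` is h-quasiconvex on `Ω` if `u(w) ≤ max (u p) (u q)` for all
`p ∈ Ω`, `q ∈ ℍ_p ∩ Ω` and `w ∈ [p,q]`. -/
def IsHQuasiconvexOn (Ω : Set Heis) (u : Heis → ℝ) : Prop :=
  ∀ p ∈ Ω, ∀ q ∈ hplane p, q ∈ Ω → ∀ w ∈ hseg p q, u w ≤ max (u p) (u q)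

/-- `Qf` is the h-quasiconvex envelope of `f` on `Ω`: the greatest h-quasiconvex
function majorized by `f` on `Ω` (equivalently, the pointwise supremum of all
h-quasiconvex minorants of `f`). -/
def IsHQCEnvelopeOn (Ω : Set Heis) (f Qf : Heis → ℝ) : Prop :=
  IsHQuasiconvexOn Ω Qf ∧ (∀ p ∈ Ω, Qf p ≤ f p) ∧
    ∀ g : Heis → ℝ, IsHQuasiconvexOn Ω g → (∀ p ∈ Ω, g p ≤ f p) → ∀ p ∈ Ω, g p ≤ Qf p

/-- The Korányi gauge. -/
def kGauge (p : Heis) : ℝ := ((p.1 ^ 2 + p.2.1 ^ 2) ^ 2 + 16 * p.2.2 ^ 2) ^ ((1 : ℝ) / 4)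

/-- The left-invariant gauge metric `d_H(p,q) = |p⁻¹ · q|_G`. -/
def dLeft (p q : Heis) : ℝ := kGauge (hmul (hinv p) q)

/-- The right-invariant gauge metric `d̃_H(p,q) = |p · q⁻¹|_G`. -/
def dRight (p q : Heis) : ℝ := kGauge (hmul p (hinv q))

/-- The gauge ball `B_r(p) = {q : |p⁻¹ · q|_G < r}`. -/
def gball (p : Heis) (r : ℝ) : Set Heis := {q | dLeft p q < r}

/-- The horizontal gradient `∇_H φ(p) = (X₁ φ(p), X₂ φ(p))`, where
`X₁ = ∂_x − (y/2) ∂_z` and `X₂ = ∂_y + (x/2) ∂_z`. -/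
def hGrad (φ : Heis → ℝ) (p : Heis) : ℝ × ℝ :=
  (fderiv ℝ φ p ((1, 0, -p.2.1 / 2) : Heis), fderiv ℝ φ p ((0, 1, p.1 / 2) : Heis))

/-- The pairing `⟨∇_H φ(p), (p⁻¹ · ξ)_h⟩`. -/
def hpair (φ : Heis → ℝ) (p ξ : Heis) : ℝ :=
  (hGrad φ p).1 * (hmul (hinv p) ξ).1 + (hGrad φ p).2 * (hmul (hinv p) ξ).2.1

/-- Local boundedness of `u` on `A`. -/
def LocBddOn (A : Set Heis) (u : Heis → ℝ) : Prop :=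
  ∀ p ∈ A, ∃ s ∈ nhds p, ∃ C : ℝ, ∀ q ∈ s ∩ A, |u q| ≤ C

/-- `u` is a viscosity subsolution of `u + H(p, u, ∇_H u) = f` in `Ω`, where
`H(p, u, ∇_H u) = sup {⟨∇_H u(p), (p⁻¹·ξ)_h⟩ : ξ ∈ ℍ_p ∩ Ω, u(ξ) < u(p)}`
(with the supremum understood to be `0` when `∇_H φ(p) = 0`). -/
def IsSubSoln (Ω : Set Heis) (f u : Heis → ℝ) : Prop :=
  UpperSemicontinuousOn u Ω ∧ LocBddOn Ω u ∧
    ∀ p ∈ Ω, ∀ φ : Heis → ℝ, ContDiff ℝ 1 φ →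
      IsMaxOn (fun q => u q - φ q) Ω p →
        (∀ ξ ∈ hplane p, ξ ∈ Ω → u ξ < u p → u p + hpair φ p ξ ≤ f p) ∧
        (hGrad φ p = 0 → u p ≤ f p)

/-- `u` is a viscosity supersolution of `u + H(p, u, ∇_H u) = f` in `Ω`, where for
supersolutions `H(p, u, ∇_H u) = sup {⟨∇_H u(p), (p⁻¹·ξ)_h⟩ : ξ ∈ ℍ_p ∩ Ω, u(ξ) ≤ u(p)}`.
(The set `Ŝ_p(u)` always contains `p` itself, so the inequality
`u(p) + sup ≥ f(p)` is expressed in ε-form.) -/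
def IsSuperSoln (Ω : Set Heis) (f u : Heis → ℝ) : Prop :=
  LowerSemicontinuousOn u Ω ∧ LocBddOn Ω u ∧
    ∀ p ∈ Ω, ∀ φ : Heis → ℝ, ContDiff ℝ 1 φ →
      IsMinOn (fun q => u q - φ q) Ω p →
        ∀ ε > 0, ∃ ξ ∈ hplane p, ξ ∈ Ω ∧ u ξ ≤ u p ∧ f p - ε ≤ u p + hpair φ p ξ

/-- `w` is the upper semicontinuous envelope of `v` on `A`: the smallest
upper semicontinuous function on `A` that majorizes `v`. -/
def IsUscEnvOn (A : Set Heis) (v w : Heis → ℝ) : Prop :=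
  UpperSemicontinuousOn w A ∧ (∀ q ∈ A, v q ≤ w q) ∧
    ∀ z : Heis → ℝ, UpperSemicontinuousOn z A → (∀ q ∈ A, v q ≤ z q) → ∀ q ∈ A, w q ≤ z q

/-- `w` is the lower semicontinuous envelope of `v` on `A`: the largest
lower semicontinuous function on `A` minorized by `v`. -/
def IsLscEnvOn (A : Set Heis) (v w : Heis → ℝ) : Prop :=
  LowerSemicontinuousOn w A ∧ (∀ q ∈ A, w q ≤ v q) ∧
    ∀ z : Heis → ℝ, LowerSemicontinuousOn z A → (∀ q ∈ A, z q ≤ v q) → ∀ q ∈ A, z q ≤ w q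

/-- The h-convex hull of `E`: the intersection of all h-convex sets containing `E`. -/
def hconvexHull (E : Set Heis) : Set Heis := ⋂₀ {D : Set Heis | IsHConvex D ∧ E ⊆ D}

/-- The direct convexification operator
`T[f](w) = inf {max (f p) (f q) : w ∈ [p,q], p ∈ Ω, q ∈ Ω ∩ ℍ_p}`. -/
def Tconv (Ω : Set Heis) (f : Heis → ℝ) : Heis → ℝ := fun w =>
  sInf {y | ∃ p ∈ Ω, ∃ q ∈ hplane p, q ∈ Ω ∧ w ∈ hseg p q ∧ y = max (f p) (f q)}


/-!
Let `φ` touch `v*` from above at `p`. Adding the penalty `|q - p|²` to `φ` makes the maximum strict,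
so maximising `u - φ - |· - p|²` over a small closed ball, for members `u ∈ 𝒜` nearly attaining `v*`
near `p`, produces points `q → p` and `u ∈ 𝒜` with `u(q) → v*(p)` such that `u - φ - |· - p|²` is
maximal on all of `Ω` at `q`; the penalty does not change the horizontal gradient at `p`. The
subsolution inequalities of these `u` at `q` pass to the limit. For `ξ = p · h ∈ S_p(v*)`, upper
semicontinuity of `v*` puts `q · h` into `S_q(u)`. When `∇_H φ(p) = 0`, the horizontal gradients at
`q` are small: either some horizontal point near `q` lies in `S_q(u)` and pairs to something small,
or `u` does not decrease along the horizontal plane near `q`, which forces the horizontal gradient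
of the test function at `q` to vanish.
-/

open Filter Topology Metric

section Semicontinuity

variable {α : Type*} [TopologicalSpace α]

theorem UpperSemicontinuousOn.eventually_lt_of_isOpen {s : Set α} {w : α → ℝ}
    (hw : UpperSemicontinuousOn w s) (hs : IsOpen s) {x : α} (hx : x ∈ s) {c : ℝ}
    (hc : w x < c) : ∀ᶠ y in 𝓝 x, y ∈ s ∧ w y < c := by
  have := hw x hx c hc
  rw [hs.nhdsWithin_eq hx] at this
  exact Filter.Eventually.and (hs.mem_nhds hx) this

theorem UpperSemicontinuousOn.piecewise_min {s U : Set α} [DecidablePred (· ∈ U)] {w : α → ℝ}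
    (hw : UpperSemicontinuousOn w s) (hU : IsOpen U) (c : ℝ) :
    UpperSemicontinuousOn (U.piecewise (fun q => min (w q) c) w) s := by
  intro x hx
  by_cases hxU : x ∈ U
  · refine UpperSemicontinuousWithinAt.congr_of_eventuallyEq (UpperSemicontinuousWithinAt.inf
      (hw x hx) (upperSemicontinuousWithinAt_const (z := c))) hx ?_
    filter_upwards [nhdsWithin_le_nhds (hU.mem_nhds hxU)] with q hq
    rw [Set.piecewise_eq_of_mem _ _ _ hq]
  · intro y hy
    rw [Set.piecewise_eq_of_notMem _ _ _ hxU] at hy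
    filter_upwards [hw x hx y hy] with q hq
    refine lt_of_le_of_lt ?_ hq
    by_cases hqU : q ∈ U
    · rw [Set.piecewise_eq_of_mem _ _ _ hqU]; exact min_le_left _ _
    · rw [Set.piecewise_eq_of_notMem _ _ _ hqU]

end Semicontinuity

namespace IsUscEnvOn

variable {Ω : Set Heis} {v w : Heis → ℝ}

theorem le_of_forall_le (hw : IsUscEnvOn Ω v w) {U : Set Heis} (hU : IsOpen U) {c : ℝ}
    (hc : ∀ q ∈ U ∩ Ω, v q ≤ c) {p : Heis} (hp : p ∈ U ∩ Ω) : w p ≤ c := by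
  classical
  have hz := hw.2.2 _ (hw.1.piecewise_min hU c) (fun q hq => ?_) p hp.2
  · rw [Set.piecewise_eq_of_mem _ _ _ hp.1] at hz
    exact hz.trans (min_le_right _ _)
  · by_cases hqU : q ∈ U
    · rw [Set.piecewise_eq_of_mem _ _ _ hqU]
      exact le_min (hw.2.1 q hq) (hc q ⟨hqU, hq⟩)
    · rw [Set.piecewise_eq_of_notMem _ _ _ hqU]
      exact hw.2.1 q hq

theorem frequently_lt (hw : IsUscEnvOn Ω v w) {p : Heis} (hp : p ∈ Ω) {ε : ℝ} (hε : 0 < ε) :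
    ∃ᶠ q in 𝓝 p, q ∈ Ω ∧ w p - ε < v q := by
  intro h
  obtain ⟨U, hUle, hU, hpU⟩ := _root_.eventually_nhds_iff.1 h
  have := hw.le_of_forall_le hU (fun q hq => not_lt.1 fun hlt => hUle q hq.1 ⟨hq.2, hlt⟩)
    ⟨hpU, hp⟩
  linarith

theorem locBddOn (hw : IsUscEnvOn Ω v w) (hv : LocBddOn Ω v) : LocBddOn Ω w := by
  intro p hp
  obtain ⟨s, hs, C, hC⟩ := hv p hp
  have hCs : ∀ q ∈ interior s ∩ Ω, |v q| ≤ C := fun q hq => hC q ⟨interior_subset hq.1, hq.2⟩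
  refine ⟨interior s, interior_mem_nhds.2 hs, C, fun q hq => abs_le.2 ⟨?_, ?_⟩⟩
  · exact (neg_le_of_abs_le (hCs q hq)).trans (hw.2.1 q hq.2)
  · exact hw.le_of_forall_le isOpen_interior (fun x hx => (le_abs_self _).trans (hCs x hx)) hq

theorem frequently_exists_lt_of_eq_sSup {A : Set (Heis → ℝ)} (hw : IsUscEnvOn Ω v w)
    (hA : A.Nonempty) (hv : ∀ p, v p = sSup {y | ∃ u ∈ A, y = u p}) {p : Heis} (hp : p ∈ Ω)
    {ε : ℝ} (hε : 0 < ε) : ∃ᶠ q in 𝓝 p, ∃ u ∈ A, w p - ε < u q := by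
  refine (hw.frequently_lt hp (half_pos hε)).mono fun q hq => ?_
  obtain ⟨u₀, hu₀⟩ := hA
  have hsup : v q - ε / 2 < sSup {y | ∃ u ∈ A, y = u q} := hv q ▸ sub_lt_self _ (half_pos hε)
  have hne : {y | ∃ u ∈ A, y = u q}.Nonempty := ⟨u₀ q, u₀, hu₀, rfl⟩
  obtain ⟨_, ⟨u, hu, rfl⟩, hlt⟩ := exists_lt_of_lt_csSup hne hsup
  exact ⟨u, hu, by linarith [hq.2]⟩

end IsUscEnvOn

section Penalization

variable {α : Type*} [PseudoMetricSpace α] {Ω : Set α} {p : α}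

theorem dist_sq_lt_and_isMaxOn_of_isMaxOn_closedBall {F g : α → ℝ} {L c r : ℝ} {q : α}
    (hq : IsMaxOn F (closedBall p r) q) (hqΩ : q ∈ Ω) (hF : ∀ y ∈ Ω, F y ≤ L - g y)
    (hg : ∀ y, dist y p ^ 2 ≤ g y) (hr : 0 ≤ r) (hc : c ≤ r ^ 2) (hval : L - c < F q) :
    dist q p ^ 2 < c ∧ IsMaxOn F Ω q := by
  refine ⟨by linarith [hF q hqΩ, hg q], fun y hy => ?_⟩
  by_cases hyK : y ∈ closedBall p r
  · exact hq hyK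
  · have hry : r ^ 2 < dist y p ^ 2 := pow_lt_pow_left₀ (not_le.1 hyK) hr two_ne_zero
    show F y ≤ F q
    linarith [hF y hy, hg y]

theorem frequently_isMaxOn_sub_add_of_isMaxOn_sub [ProperSpace α] {w φ g : α → ℝ}
    {A : Set (α → ℝ)} (hmax : IsMaxOn (fun q => w q - φ q) Ω p) (hΩ : Ω ∈ 𝓝 p)
    (hφ : Continuous φ) (hg : Continuous g) (hgp : g p = 0) (hg_dist : ∀ q, dist q p ^ 2 ≤ g q)
    (husc : ∀ u ∈ A, UpperSemicontinuousOn u Ω) (hle : ∀ u ∈ A, ∀ q ∈ Ω, u q ≤ w q)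
    (happrox : ∀ ε > 0, ∃ᶠ q in 𝓝 p, ∃ u ∈ A, w p - ε < u q) {ε : ℝ} (hε : 0 < ε) :
    ∃ᶠ q in 𝓝 p, q ∈ Ω ∧ ∃ u ∈ A, w p - ε < u q ∧ IsMaxOn (fun y => u y - (φ y + g y)) Ω q := by
  set ψ := fun y => φ y + g y
  have hψ : Continuous ψ := hφ.add hg
  have hψp : ψ p = φ p := by simp [ψ, hgp]
  obtain ⟨r, hr, hrΩ⟩ := nhds_basis_closedBall.mem_iff.1 hΩ
  refine frequently_iff.2 fun {N} hN => ?_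
  obtain ⟨δ, hδ, hδN⟩ := Metric.mem_nhds_iff.1 (inter_mem hN
    ((hψ.tendsto p).eventually_const_lt (sub_lt_self (ψ p) (half_pos hε))))
  set m := min δ r
  have hm : 0 < m := lt_min hδ hr
  -- `4η ≤ m²` keeps the maximiser within `m` of `p`, and `4η ≤ ε` bounds what `u` loses there.
  set η := min (m ^ 2) ε / 4 with hη_def
  have hη : 0 < η := by positivity
  have hηm : 4 * η ≤ m ^ 2 := by rw [hη_def]; linarith [min_le_left (m ^ 2) ε]
  have hηε : 4 * η ≤ ε := by rw [hη_def]; linarith [min_le_right (m ^ 2) ε]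
  have hmr : m ^ 2 ≤ r ^ 2 := pow_le_pow_left₀ hm.le (min_le_right δ r) 2
  obtain ⟨p', ⟨u, hu, hup'⟩, hψp', hp'K⟩ := ((happrox η hη).and_eventually
    (((hψ.tendsto p).eventually_lt_const (lt_add_of_pos_right (ψ p) hη)).and
      (closedBall_mem_nhds p hr))).exists
  obtain ⟨q, hqK, hq⟩ := (((husc u hu).mono hrΩ).add
    hψ.neg.continuousOn.upperSemicontinuousOn).exists_isMaxOn
    ⟨p, mem_closedBall_self hr.le⟩ (isCompact_closedBall p r)
  simp only [Pi.neg_apply, ← sub_eq_add_neg] at hq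
  have hub : ∀ y ∈ Ω, u y - ψ y ≤ (w p - φ p) - g y := fun y hy => by
    linarith [hle u hu y hy, isMaxOn_iff.1 hmax y hy]
  have hval : (w p - φ p) - 2 * η < u q - ψ q := by linarith [isMaxOn_iff.1 hq p' hp'K]
  obtain ⟨hqp, hqmax⟩ := dist_sq_lt_and_isMaxOn_of_isMaxOn_closedBall hq (hrΩ hqK) hub hg_dist hr.le
    (by linarith) hval
  have hqδ : dist q p < δ := (lt_of_pow_lt_pow_left₀ 2 hm.le (by linarith)).trans_le
    (min_le_left δ r)
  have hψq : ψ p - ε / 2 < ψ q := (hδN hqδ).2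
  exact ⟨q, (hδN hqδ).1, hrΩ hqK, u, hu, by linarith, hqmax⟩

end Penalization

-- The metric of `Heis` is the sup metric, whose square is not `C¹`.
def euclidSqDist (p q : Heis) : ℝ :=
  (q.1 - p.1) ^ 2 + (q.2.1 - p.2.1) ^ 2 + (q.2.2 - p.2.2) ^ 2

theorem euclidSqDist_self (p : Heis) : euclidSqDist p p = 0 := by simp [euclidSqDist]

theorem euclidSqDist_nonneg (p q : Heis) : 0 ≤ euclidSqDist p q := by
  unfold euclidSqDist; positivity

theorem contDiff_euclidSqDist (p : Heis) : ContDiff ℝ 1 (euclidSqDist p) := by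
  unfold euclidSqDist; fun_prop

theorem dist_sq_le_euclidSqDist (p q : Heis) : dist q p ^ 2 ≤ euclidSqDist p q := by
  have h := euclidSqDist_nonneg p q
  have hdist : dist q p ≤ √(euclidSqDist p q) := by
    simp only [Prod.dist_eq, Real.dist_eq]
    refine max_le (Real.abs_le_sqrt ?_) (max_le (Real.abs_le_sqrt ?_) (Real.abs_le_sqrt ?_)) <;>
      unfold euclidSqDist <;> nlinarith [sq_nonneg (q.1 - p.1), sq_nonneg (q.2.1 - p.2.1),
        sq_nonneg (q.2.2 - p.2.2)]
  calc dist q p ^ 2 ≤ √(euclidSqDist p q) ^ 2 := pow_le_pow_left₀ dist_nonneg hdist 2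
    _ = euclidSqDist p q := Real.sq_sqrt h

theorem hGrad_add_euclidSqDist {φ : Heis → ℝ} {p : Heis} (hφ : DifferentiableAt ℝ φ p) :
    hGrad (fun q => φ q + euclidSqDist p q) p = hGrad φ p := by
  have hmin : IsLocalMin (euclidSqDist p) p := Eventually.of_forall fun q => by
    rw [euclidSqDist_self]; exact euclidSqDist_nonneg p q
  have hd : fderiv ℝ (fun q => φ q + euclidSqDist p q) p = fderiv ℝ φ p := by
    rw [fderiv_fun_add hφ ((contDiff_euclidSqDist p).differentiable one_ne_zero p),
      hmin.fderiv_eq_zero, add_zero]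
  simp only [hGrad, hd]

theorem continuous_hmul_right (h : Heis) : Continuous fun q => hmul q h := by
  unfold hmul; fun_prop

theorem hmul_hinv_hmul (p h : Heis) : hmul (hinv p) (hmul p h) = h := by
  simp only [hmul, hinv]; ext <;> ring_nf

theorem add_smul_mem_hplane (q : Heis) (t a b : ℝ) :
    q + t • ((a, b, (q.1 * b - a * q.2.1) / 2) : Heis) ∈ hplane q :=
  ⟨(t * a, t * b, 0), rfl, by simp only [hmul]; ext <;> simp; ring⟩

theorem hpair_hmul (ψ : Heis → ℝ) (q h : Heis) :
    hpair ψ q (hmul q h) = (hGrad ψ q).1 * h.1 + (hGrad ψ q).2 * h.2.1 := by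
  rw [hpair, hmul_hinv_hmul]

theorem continuous_hGrad {ψ : Heis → ℝ} (hψ : ContDiff ℝ 1 ψ) : Continuous (hGrad ψ) := by
  have hd : Continuous (fderiv ℝ ψ) := hψ.continuous_fderiv one_ne_zero
  exact (hd.clm_apply (by fun_prop)).prodMk (hd.clm_apply (by fun_prop))

theorem continuous_hpair_hmul {ψ : Heis → ℝ} (hψ : ContDiff ℝ 1 ψ) (h : Heis) :
    Continuous fun q => hpair ψ q (hmul q h) := by
  simp only [hpair_hmul]
  have hG := continuous_hGrad hψ
  fun_prop

theorem abs_hpair_le (ψ : Heis → ℝ) (q ξ : Heis) :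
    |hpair ψ q ξ| ≤ 2 * ‖hGrad ψ q‖ * dist ξ q := by
  have hx : |(hmul (hinv q) ξ).1| ≤ dist ξ q := by
    rw [dist_eq_norm]; simpa [hmul, hinv, neg_add_eq_sub] using norm_fst_le (ξ - q)
  have hy : |(hmul (hinv q) ξ).2.1| ≤ dist ξ q := by
    rw [dist_eq_norm]
    simpa [hmul, hinv, neg_add_eq_sub] using (norm_fst_le (ξ - q).2).trans (norm_snd_le (ξ - q))
  have hG₁ : |(hGrad ψ q).1| ≤ ‖hGrad ψ q‖ := by
    simpa only [Real.norm_eq_abs] using norm_fst_le (hGrad ψ q)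
  have hG₂ : |(hGrad ψ q).2| ≤ ‖hGrad ψ q‖ := by
    simpa only [Real.norm_eq_abs] using norm_snd_le (hGrad ψ q)
  calc |hpair ψ q ξ|
      ≤ |(hGrad ψ q).1| * |(hmul (hinv q) ξ).1| + |(hGrad ψ q).2| * |(hmul (hinv q) ξ).2.1| := by
        rw [hpair, ← abs_mul, ← abs_mul]; exact abs_add_le _ _
    _ ≤ ‖hGrad ψ q‖ * dist ξ q + ‖hGrad ψ q‖ * dist ξ q := by gcongr
    _ = 2 * ‖hGrad ψ q‖ * dist ξ q := by ring

theorem fderiv_apply_eq_zero_of_isLocalMin_line {E : Type*} [NormedAddCommGroup E]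
    [NormedSpace ℝ E] {ψ : E → ℝ} {q w : E} (hψ : DifferentiableAt ℝ ψ q)
    (hmin : IsLocalMin (fun t : ℝ => ψ (q + t • w)) 0) : fderiv ℝ ψ q w = 0 := by
  have hline : HasDerivAt (fun t : ℝ => q + t • w) w 0 := by
    simpa using ((hasDerivAt_id (0 : ℝ)).smul_const w).const_add q
  refine hmin.hasDerivAt_eq_zero ?_
  exact (by simpa using hψ.hasFDerivAt : HasFDerivAt ψ (fderiv ℝ ψ q) (q + (0 : ℝ) • w))
    |>.comp_hasDerivAt 0 hline

theorem hGrad_eq_zero_of_eventually_le {ψ : Heis → ℝ} {q : Heis} (hψ : DifferentiableAt ℝ ψ q)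
    (hmin : ∀ᶠ ξ in 𝓝 q, ξ ∈ hplane q → ψ q ≤ ψ ξ) : hGrad ψ q = 0 := by
  have key (a b : ℝ) : fderiv ℝ ψ q ((a, b, (q.1 * b - a * q.2.1) / 2) : Heis) = 0 := by
    refine fderiv_apply_eq_zero_of_isLocalMin_line hψ ?_
    have hline : Tendsto (fun t : ℝ => q + t • ((a, b, (q.1 * b - a * q.2.1) / 2) : Heis))
        (𝓝 0) (𝓝 q) :=
      Continuous.tendsto' (by fun_prop) 0 q (by simp)
    filter_upwards [hline.eventually hmin] with t ht
    simpa using ht (add_smul_mem_hplane q t a b)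
  simp only [hGrad, Prod.mk_eq_zero]
  exact ⟨by simpa using key 1 0, by simpa using key 0 1⟩

theorem IsSubSoln.le_add_of_norm_hGrad_le {Ω : Set Heis} {f u ψ : Heis → ℝ} {q : Heis}
    {ε : ℝ} (hu : IsSubSoln Ω f u) (hΩ : IsOpen Ω) (hq : q ∈ Ω) (hψ : ContDiff ℝ 1 ψ)
    (hmax : IsMaxOn (fun y => u y - ψ y) Ω q) (hε : ‖hGrad ψ q‖ ≤ ε) : u q ≤ f q + 2 * ε := by
  obtain ⟨hS, hzero⟩ := hu.2.2 q hq ψ hψ hmax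
  by_cases hex : ∃ ξ ∈ hplane q, ξ ∈ Ω ∧ dist ξ q < 1 ∧ u ξ < u q
  · obtain ⟨ξ, hξ, hξΩ, hξq, hlt⟩ := hex
    have hbound : 2 * ‖hGrad ψ q‖ * dist ξ q ≤ 2 * ε := by
      nlinarith [norm_nonneg (hGrad ψ q), dist_nonneg (x := ξ) (y := q)]
    linarith [hS ξ hξ hξΩ hlt, neg_abs_le (hpair ψ q ξ), abs_hpair_le ψ q ξ]
  · push Not at hex
    -- `u` does not decrease along the horizontal plane near `q`, so neither does `ψ`
    have hmin : ∀ᶠ ξ in 𝓝 q, ξ ∈ hplane q → ψ q ≤ ψ ξ := by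
      filter_upwards [hΩ.mem_nhds hq, ball_mem_nhds q one_pos] with ξ hξΩ hξq hξ
      linarith [hex ξ hξ hξΩ hξq, isMaxOn_iff.1 hmax ξ hξΩ]
    have := hzero (hGrad_eq_zero_of_eventually_le (hψ.differentiable one_ne_zero q) hmin)
    linarith [(norm_nonneg _).trans hε]

section Limit

variable {Ω : Set Heis} {f w ψ : Heis → ℝ} {A : Set (Heis → ℝ)} {p : Heis}

theorem add_hpair_le_of_frequently_isMaxOn (hΩ : IsOpen Ω) (hf : UpperSemicontinuousOn f Ω)
    (hA : ∀ u ∈ A, IsSubSoln Ω f u) (hw : UpperSemicontinuousOn w Ω)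
    (hle : ∀ u ∈ A, ∀ q ∈ Ω, u q ≤ w q) (hψ : ContDiff ℝ 1 ψ) (hp : p ∈ Ω)
    (htouch : ∀ ε > 0, ∃ᶠ q in 𝓝 p, q ∈ Ω ∧ ∃ u ∈ A, w p - ε < u q ∧
      IsMaxOn (fun y => u y - ψ y) Ω q)
    {ξ : Heis} (hξ : ξ ∈ hplane p) (hξΩ : ξ ∈ Ω) (hlt : w ξ < w p) :
    w p + hpair ψ p ξ ≤ f p := by
  obtain ⟨h, hh, rfl⟩ := hξ
  refine le_of_forall_pos_lt_add fun ε hε => ?_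
  obtain ⟨c, hξc, hcp⟩ := exists_between hlt
  have hf_near := (hf.eventually_lt_of_isOpen hΩ hp (lt_add_of_pos_right (f p) (by positivity :
    0 < ε / 3))).mono fun _ hq => hq.2
  have hpair_near : ∀ᶠ q in 𝓝 p, hpair ψ p (hmul p h) - ε / 3 < hpair ψ q (hmul q h) :=
    ((continuous_hpair_hmul hψ h).tendsto p).eventually_const_lt (by linarith)
  have hξ_near : ∀ᶠ q in 𝓝 p, hmul q h ∈ Ω ∧ w (hmul q h) < c :=
    ((continuous_hmul_right h).tendsto p).eventually
      (hw.eventually_lt_of_isOpen hΩ hξΩ hξc)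
  obtain ⟨q, ⟨hqΩ, u, hu, hwu, hmax⟩, hfq, hpq, hξq, hwξq⟩ :=
    ((htouch (min (ε / 3) (w p - c)) (lt_min (by positivity) (sub_pos.2 hcp))).and_eventually
      (hf_near.and (hpair_near.and hξ_near))).exists
  have hdecr : u (hmul q h) < u q := by
    linarith [hle u hu _ hξq, min_le_right (ε / 3) (w p - c)]
  have := ((hA u hu).2.2 q hqΩ ψ hψ hmax).1 (hmul q h) ⟨h, hh, rfl⟩ hξq hdecr
  linarith [min_le_left (ε / 3) (w p - c)]

theorem le_of_frequently_isMaxOn_of_hGrad_eq_zero (hΩ : IsOpen Ω)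
    (hf : UpperSemicontinuousOn f Ω) (hA : ∀ u ∈ A, IsSubSoln Ω f u) (hψ : ContDiff ℝ 1 ψ)
    (hp : p ∈ Ω)
    (htouch : ∀ ε > 0, ∃ᶠ q in 𝓝 p, q ∈ Ω ∧ ∃ u ∈ A, w p - ε < u q ∧
      IsMaxOn (fun y => u y - ψ y) Ω q)
    (hzero : hGrad ψ p = 0) : w p ≤ f p := by
  refine le_of_forall_pos_lt_add fun ε hε => ?_
  have hf_near := (hf.eventually_lt_of_isOpen hΩ hp (lt_add_of_pos_right (f p) (by positivity :
    0 < ε / 4))).mono fun _ hq => hq.2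
  have hgrad_near : ∀ᶠ q in 𝓝 p, ‖hGrad ψ q‖ < ε / 4 :=
    ((continuous_hGrad hψ).norm.tendsto p).eventually_lt_const (by simp [hzero, hε])
  obtain ⟨q, ⟨hqΩ, u, hu, hwu, hmax⟩, hfq, hgq⟩ :=
    ((htouch (ε / 4) (by positivity)).and_eventually (hf_near.and hgrad_near)).exists
  linarith [(hA u hu).le_add_of_norm_hGrad_le hΩ hqΩ hψ hmax hgq.le]

end Limit

theorem sup_of_subsolutions_general
    (Ω : Set Heis) (hΩo : IsOpen Ω)
    (f : Heis → ℝ) (hfusc : UpperSemicontinuousOn f Ω)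
    (A : Set (Heis → ℝ)) (hA : A.Nonempty)
    (hAsub : ∀ u ∈ A, IsSubSoln Ω f u)
    (v : Heis → ℝ)
    (hv : ∀ p : Heis, v p = sSup {y : ℝ | ∃ u ∈ A, y = u p})
    (hvb : ∀ p ∈ Ω, BddAbove {y : ℝ | ∃ u ∈ A, y = u p})
    (hvlb : LocBddOn Ω v)
    (vstar : Heis → ℝ) (hvstar : IsUscEnvOn Ω v vstar) :
    IsSubSoln Ω f vstar := by
  have hle : ∀ u ∈ A, ∀ q ∈ Ω, u q ≤ vstar q := fun u hu q hq =>
    (hv q ▸ le_csSup (hvb q hq) ⟨u, hu, rfl⟩).trans (hvstar.2.1 q hq)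
  refine ⟨hvstar.1, hvstar.locBddOn hvlb, fun p hp φ hφ hmax => ?_⟩
  set ψ := fun q => φ q + euclidSqDist p q
  have hψ : ContDiff ℝ 1 ψ := hφ.add (contDiff_euclidSqDist p)
  have htouch : ∀ ε > 0, ∃ᶠ q in 𝓝 p, q ∈ Ω ∧ ∃ u ∈ A, vstar p - ε < u q ∧
      IsMaxOn (fun y => u y - ψ y) Ω q := fun ε hε =>
    frequently_isMaxOn_sub_add_of_isMaxOn_sub hmax (hΩo.mem_nhds hp) hφ.continuous
      (contDiff_euclidSqDist p).continuous (euclidSqDist_self p) (dist_sq_le_euclidSqDist p)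
      (fun u hu => (hAsub u hu).1) hle
      (fun _ hδ => hvstar.frequently_exists_lt_of_eq_sSup hA hv hp hδ) hε
  have hgrad : hGrad ψ p = hGrad φ p := hGrad_add_euclidSqDist (hφ.differentiable one_ne_zero p)
  refine ⟨fun ξ hξ hξΩ hlt => ?_, fun hzero => ?_⟩
  · simpa only [hpair, hgrad] using
      add_hpair_le_of_frequently_isMaxOn hΩo hfusc hAsub hvstar.1 hle hψ hp htouch hξ hξΩ hlt
  · exact le_of_frequently_isMaxOn_of_hGrad_eq_zero hΩo hfusc hAsub hψ hp htouch
      (hgrad.trans hzero)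

/-- Proposition 3.9 (Maximal subsolution): the upper semicontinuous envelope of
the pointwise supremum of a family of viscosity subsolutions is again a
viscosity subsolution. -/
theorem sup_of_subsolutions
    (Ω : Set Heis) (hΩo : IsOpen Ω) (hΩconn : IsConnected Ω)
    (f : Heis → ℝ) (hfusc : UpperSemicontinuousOn f Ω) (hfb : LocBddOn Ω f)
    (A : Set (Heis → ℝ)) (hA : A.Nonempty)
    (hAsub : ∀ u ∈ A, IsSubSoln Ω f u)
    (v : Heis → ℝ)
    (hv : ∀ p : Heis, v p = sSup {y : ℝ | ∃ u ∈ A, y = u p})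
    (hvb : ∀ p ∈ Ω, BddAbove {y : ℝ | ∃ u ∈ A, y = u p})
    (hvlb : LocBddOn Ω v)
    (vstar : Heis → ℝ) (hvstar : IsUscEnvOn Ω v vstar) :
    IsSubSoln Ω f vstar :=
  sup_of_subsolutions_general Ω hΩo f hfusc A hA hAsub v hv hvb hvlb vstar hvstar
end
end

section
/- Let E ⊂ ℍ be a bounded open set, let Ω = B_R(0) with R > 0 large enough that the closure of the h-convex hull co(E) is contained in Ω, and let f ∈ C(ℍ) satisfy E = {p ∈ ℍ : f(p) < 0} and f ≡ K in ℍ ∖ B_R(0) for some K > 0. Let Q(f) denote the h-quasiconvex envelope of f. Then Q(f) is continuous on ℍ, Q(f) ≡ K in ℍ ∖ B_R(0), and co(E) = {p ∈ Ω : Q(f)(p) < 0}. -/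
noncomputable section

/-! The envelope has the level-set form `Q(f)(p) = inf {t : p ∈ co {f ≤ t}}`: this function is
h-quasiconvex and below `f`, and it dominates every h-quasiconvex minorant of `f`, whose
sublevel sets are h-convex. Hence `co {f < s} = {Q(f) < s}` for every `s`; at `s = 0` this is
`co(E)`, and at `s = K` it lies in the h-convex gauge ball, forcing `Q(f) = K` outside the ball.
Since `f` is constant off a compact set, small left translations raise `f` uniformly little, and
left translations preserve h-convex hulls, so `Q(f)(a · p) ≤ Q(f)(p) + η` for all `p` once `a`
is small; this gives continuity. -/

open Set Filter Topology

section HeisenbergGroup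

@[simp] lemma hinv_zero : hinv 0 = 0 := by
  simp [hinv]

@[simp] lemma zero_hmul (p : Heis) : hmul 0 p = p := by
  simp [hmul]

lemma hmul_assoc (p q r : Heis) : hmul (hmul p q) r = hmul p (hmul q r) := by
  simp only [hmul, Prod.mk.injEq]
  exact ⟨by ring, by ring, by ring⟩

lemma hinv_hmul_cancel_left (p q : Heis) : hmul (hinv p) (hmul p q) = q := by
  simp only [hmul, hinv, Prod.ext_iff]
  exact ⟨by ring, by ring, by ring⟩

lemma hmul_hinv_cancel_right (p q : Heis) : hmul (hmul p (hinv q)) q = p := by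
  simp only [hmul, hinv, Prod.ext_iff]
  exact ⟨by ring, by ring, by ring⟩

lemma hmul_hinv_self (p : Heis) : hmul p (hinv p) = 0 := by
  simp only [hmul, hinv, Prod.ext_iff, Prod.fst_zero, Prod.snd_zero]
  exact ⟨by ring, by ring, by ring⟩

lemma hmul_segment (a p q : Heis) (l : ℝ) :
    hmul a ((1 - l) • p + l • q) = (1 - l) • hmul a p + l • hmul a q := by
  simp only [hmul, Prod.ext_iff, Prod.smul_fst, Prod.smul_snd, Prod.fst_add, Prod.snd_add,
    smul_eq_mul]
  exact ⟨by ring, by ring, by ring⟩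

@[fun_prop] lemma Continuous.hmul {α : Type*} [TopologicalSpace α] {g h : α → Heis}
    (hg : Continuous g) (hh : Continuous h) :
    Continuous fun x => hmul (g x) (h x) := by
  unfold _root_.hmul
  fun_prop

@[fun_prop] lemma Continuous.hinv {α : Type*} [TopologicalSpace α] {g : α → Heis}
    (hg : Continuous g) : Continuous fun x => hinv (g x) := by
  unfold _root_.hinv
  fun_prop

lemma hmul_mem_hplane {p q : Heis} (a : Heis) (hq : q ∈ hplane p) :
    hmul a q ∈ hplane (hmul a p) := by
  obtain ⟨h, hh, rfl⟩ := hq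
  exact ⟨h, hh, (hmul_assoc a p h).symm⟩

lemma hmul_mem_hseg {p q w : Heis} (a : Heis) (hw : w ∈ hseg p q) :
    hmul a w ∈ hseg (hmul a p) (hmul a q) := by
  obtain ⟨l, h0, h1, rfl⟩ := hw
  exact ⟨l, h0, h1, hmul_segment a p q l⟩

end HeisenbergGroup

section HConvex

variable {D E F : Set Heis}

lemma IsHConvex.preimage_hmul (hD : IsHConvex D) (a : Heis) : IsHConvex (hmul a ⁻¹' D) :=
  fun _ hp _ hq hqD _ hw => hD _ hp _ (hmul_mem_hplane a hq) hqD _ (hmul_mem_hseg a hw)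

lemma Convex.isHConvex (hD : Convex ℝ D) : IsHConvex D := by
  rintro p hp q - hq w ⟨l, h0, h1, rfl⟩
  exact hD hp hq (sub_nonneg.2 h1) h0 (sub_add_cancel 1 l)

lemma subset_hconvexHull (E : Set Heis) : E ⊆ hconvexHull E :=
  fun _ hx _ hD => hD.2 hx

lemma hconvexHull_min (hD : IsHConvex D) (hED : E ⊆ D) : hconvexHull E ⊆ D :=
  fun _ hx => hx D ⟨hD, hED⟩

lemma isHConvex_hconvexHull (E : Set Heis) : IsHConvex (hconvexHull E) :=
  fun p hp q hq hqE w hw D hD => hD.1 p (hp D hD) q hq (hqE D hD) w hw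

lemma hconvexHull_mono (h : E ⊆ F) : hconvexHull E ⊆ hconvexHull F :=
  hconvexHull_min (isHConvex_hconvexHull F) (h.trans (subset_hconvexHull F))

lemma mapsTo_hmul_hconvexHull {a : Heis} (h : MapsTo (hmul a) E F) :
    MapsTo (hmul a) (hconvexHull E) (hconvexHull F) :=
  hconvexHull_min ((isHConvex_hconvexHull F).preimage_hmul a)
    fun _ hx => subset_hconvexHull F (h hx)

end HConvex

section Quasiconvex

variable {u : Heis → ℝ}

lemma IsHQuasiconvexOn.isHConvex_setOf_le (hu : IsHQuasiconvexOn univ u) (t : ℝ) :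
    IsHConvex {x | u x ≤ t} :=
  fun p hp q hq hqt w hw => (hu p trivial q hq trivial w hw).trans (max_le hp hqt)

lemma IsHQuasiconvexOn.isHConvex_setOf_lt (hu : IsHQuasiconvexOn univ u) (t : ℝ) :
    IsHConvex {x | u x < t} :=
  fun p hp q hq hqt w hw => (hu p trivial q hq trivial w hw).trans_lt (max_lt hp hqt)

lemma IsHQCEnvelopeOn.eqOn {Ω : Set Heis} {f v : Heis → ℝ} (hu : IsHQCEnvelopeOn Ω f u)
    (hv : IsHQCEnvelopeOn Ω f v) : EqOn u v Ω :=
  fun p hp => le_antisymm (hv.2.2 u hu.1 hu.2.1 p hp) (hu.2.2 v hv.1 hv.2.1 p hp)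

end Quasiconvex

section GaugeBall

variable {R : ℝ}

def kGaugePow4 (p : Heis) : ℝ := (p.1 ^ 2 + p.2.1 ^ 2) ^ 2 + 16 * p.2.2 ^ 2

lemma mem_gball_zero_iff (hR : 0 < R) {q : Heis} :
    q ∈ gball 0 R ↔ kGaugePow4 q < R ^ 4 := by
  have h4 : kGaugePow4 q < R ^ (4 : ℝ) ↔ kGaugePow4 q < R ^ 4 := by norm_cast
  have hnonneg : 0 ≤ kGaugePow4 q := by unfold kGaugePow4; positivity
  rw [← h4, ← Real.rpow_inv_lt_iff_of_pos hnonneg hR.le (by norm_num)]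
  simp [gball, dLeft, kGauge, kGaugePow4, one_div]

lemma convexOn_kGaugePow4 : ConvexOn ℝ univ kGaugePow4 := by
  refine ⟨convex_univ, fun p _ q _ a b ha hb hab => ?_⟩
  have hsq : ∀ x y : ℝ, (a * x + b * y) ^ 2 ≤ a * x ^ 2 + b * y ^ 2 := fun x y =>
    (Even.convexOn_pow even_two).2 (mem_univ x) (mem_univ y) ha hb hab
  have hxy := pow_le_pow_left₀ (by positivity) (add_le_add (hsq p.1 q.1) (hsq p.2.1 q.2.1)) 2
  have := hsq (p.1 ^ 2 + p.2.1 ^ 2) (q.1 ^ 2 + q.2.1 ^ 2)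
  have := hsq p.2.2 q.2.2
  simp only [kGaugePow4, Prod.smul_fst, Prod.smul_snd, Prod.fst_add, Prod.snd_add, smul_eq_mul]
  nlinarith

lemma isHConvex_gball (hR : 0 < R) : IsHConvex (gball 0 R) := by
  have h : gball 0 R = {q | q ∈ univ ∧ kGaugePow4 q < R ^ 4} := by
    ext q
    simp [mem_gball_zero_iff hR]
  exact h ▸ (convexOn_kGaugePow4.convex_lt _).isHConvex

lemma isBounded_gball (hR : 0 < R) : Bornology.IsBounded (gball (0 : Heis) R) := by
  refine isBounded_iff_forall_norm_le.2 ⟨R + R ^ 2, fun q hq => ?_⟩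
  rw [mem_gball_zero_iff hR, kGaugePow4] at hq
  have hxy : q.1 ^ 2 + q.2.1 ^ 2 < R ^ 2 := by nlinarith [sq_nonneg q.2.2]
  have hx : |q.1| < R := abs_lt_of_sq_lt_sq (by nlinarith [sq_nonneg q.2.1]) hR.le
  have hy : |q.2.1| < R := abs_lt_of_sq_lt_sq (by nlinarith [sq_nonneg q.1]) hR.le
  have hz : |q.2.2| < R ^ 2 :=
    abs_lt_of_sq_lt_sq (by nlinarith [sq_nonneg (q.1 ^ 2 + q.2.1 ^ 2)]) (sq_nonneg R)
  simp only [norm_prod_le_iff, Real.norm_eq_abs]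
  refine ⟨by nlinarith [sq_nonneg R], by nlinarith [sq_nonneg R], by linarith⟩

end GaugeBall

section LevelEnvelope

def levelEnvelope (f : Heis → ℝ) (p : Heis) : ℝ :=
  sInf {t | p ∈ hconvexHull {x | f x ≤ t}}

variable {f : Heis → ℝ} {p : Heis} {t : ℝ}

lemma bddBelow_hconvexHull_levels (hb : BddBelow (range f)) (p : Heis) :
    BddBelow {t | p ∈ hconvexHull {x | f x ≤ t}} := by
  obtain ⟨m, hm⟩ := hb
  refine ⟨m, fun t ht => ?_⟩
  -- a set given by a condition not depending on the point is h-convex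
  exact hconvexHull_min (D := {_x | m ≤ t}) (fun _ h _ _ _ _ _ => h)
    (fun x hx => (hm ⟨x, rfl⟩).trans hx) ht

lemma hconvexHull_levels_nonempty (ha : BddAbove (range f)) (p : Heis) :
    {t | p ∈ hconvexHull {x | f x ≤ t}}.Nonempty := by
  obtain ⟨M, hM⟩ := ha
  exact ⟨M, subset_hconvexHull _ (hM ⟨p, rfl⟩)⟩

lemma levelEnvelope_le (hb : BddBelow (range f)) (hp : p ∈ hconvexHull {x | f x ≤ t}) :
    levelEnvelope f p ≤ t :=
  csInf_le (bddBelow_hconvexHull_levels hb p) hp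

lemma mem_hconvexHull_of_levelEnvelope_lt (ha : BddAbove (range f))
    (h : levelEnvelope f p < t) : p ∈ hconvexHull {x | f x ≤ t} := by
  obtain ⟨s, hs, hst⟩ := exists_lt_of_csInf_lt (hconvexHull_levels_nonempty ha p) h
  exact hconvexHull_mono (fun x hx => hx.trans hst.le) hs

lemma levelEnvelope_le_self (hb : BddBelow (range f)) (p : Heis) : levelEnvelope f p ≤ f p :=
  levelEnvelope_le hb (subset_hconvexHull _ (le_refl (f p)))

lemma isHQuasiconvexOn_levelEnvelope (hb : BddBelow (range f)) (ha : BddAbove (range f)) :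
    IsHQuasiconvexOn univ (levelEnvelope f) := by
  intro p _ q hq _ w hw
  refine le_of_forall_pos_le_add fun ε hε => levelEnvelope_le hb ?_
  have mem_hull {r} (hr : levelEnvelope f r ≤ max (levelEnvelope f p) (levelEnvelope f q)) :=
    mem_hconvexHull_of_levelEnvelope_lt ha (hr.trans_lt (lt_add_of_pos_right _ hε))
  exact isHConvex_hconvexHull _ p (mem_hull (le_max_left _ _)) q hq
    (mem_hull (le_max_right _ _)) w hw

lemma le_levelEnvelope (ha : BddAbove (range f)) {g : Heis → ℝ}
    (hg : IsHQuasiconvexOn univ g) (hgf : ∀ x, g x ≤ f x) (p : Heis) :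
    g p ≤ levelEnvelope f p :=
  le_csInf (hconvexHull_levels_nonempty ha p) fun t ht =>
    hconvexHull_min (hg.isHConvex_setOf_le t) (fun x hx => (hgf x).trans hx) ht

lemma isHQCEnvelopeOn_levelEnvelope (hb : BddBelow (range f)) (ha : BddAbove (range f)) :
    IsHQCEnvelopeOn univ f (levelEnvelope f) :=
  ⟨isHQuasiconvexOn_levelEnvelope hb ha, fun p _ => levelEnvelope_le_self hb p,
    fun _ hg hgf p _ => le_levelEnvelope ha hg (fun x => hgf x trivial) p⟩

lemma hconvexHull_setOf_lt (hb : BddBelow (range f)) (ha : BddAbove (range f)) (s : ℝ) :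
    hconvexHull {x | f x < s} = {p | levelEnvelope f p < s} := by
  refine subset_antisymm ?_ fun p (hp : levelEnvelope f p < s) => ?_
  · exact hconvexHull_min ((isHQuasiconvexOn_levelEnvelope hb ha).isHConvex_setOf_lt s)
      fun x hx => (levelEnvelope_le_self hb x).trans_lt hx
  · obtain ⟨t, hpt, hts⟩ := exists_between hp
    exact hconvexHull_mono (fun x hx => lt_of_le_of_lt hx hts)
      (mem_hconvexHull_of_levelEnvelope_lt ha hpt)

end LevelEnvelope

section Continuity

variable {f : Heis → ℝ} {S : Set Heis} {K : ℝ}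

lemma isBounded_range_of_eq_off_isCompact (hf : Continuous f) (hS : IsCompact S)
    (hfS : ∀ x ∉ S, f x = K) : Bornology.IsBounded (range f) := by
  refine ((hS.image hf).isBounded.union (Bornology.isBounded_singleton (x := K))).subset ?_
  rintro _ ⟨x, rfl⟩
  by_cases hx : x ∈ S
  · exact Or.inl ⟨x, hx, rfl⟩
  · exact Or.inr (hfS x hx)

lemma eventually_forall_comp_hmul_lt_add (hf : Continuous f) (hS : IsCompact S)
    (hfS : ∀ x ∉ S, f x = K) {η : ℝ} (hη : 0 < η) :
    ∀ᶠ a in 𝓝 0, ∀ x, f (hmul a x) < f x + η := by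
  -- outside `C` both `x` and `a · x` lie outside `S` when `‖a‖ ≤ 1`
  set C := (fun z : Heis × Heis => hmul (hinv z.1) z.2) '' (Metric.closedBall 0 1 ×ˢ S)
  have hC : IsCompact C := ((isCompact_closedBall 0 1).prod hS).image (by fun_prop)
  have hnear : ∀ᶠ a in 𝓝 (0 : Heis), ∀ x ∈ C, f (hmul a x) < f x + η :=
    hC.eventually_forall_of_forall_eventually fun y _ =>
      ContinuousAt.eventually_lt (by fun_prop) (by fun_prop) (by simpa using hη)
  filter_upwards [hnear, Metric.closedBall_mem_nhds (0 : Heis) one_pos] with a ha ha1 x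
  by_cases hx : x ∈ C
  · exact ha x hx
  have hxS : x ∉ S := fun h =>
    hx ⟨(0, x), ⟨Metric.mem_closedBall_self zero_le_one, h⟩, by simp⟩
  have haxS : hmul a x ∉ S := fun h =>
    hx ⟨(a, hmul a x), ⟨ha1, h⟩, hinv_hmul_cancel_left a x⟩
  rw [hfS _ hxS, hfS _ haxS]
  exact lt_add_of_pos_right K hη

lemma eventually_forall_levelEnvelope_hmul_le (hf : Continuous f) (hS : IsCompact S)
    (hfS : ∀ x ∉ S, f x = K) {η : ℝ} (hη : 0 < η) :
    ∀ᶠ a in 𝓝 0, ∀ p, levelEnvelope f (hmul a p) ≤ levelEnvelope f p + η := by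
  have hfb := isBounded_range_of_eq_off_isCompact hf hS hfS
  filter_upwards [eventually_forall_comp_hmul_lt_add hf hS hfS hη] with a ha p
  refine sub_le_iff_le_add.1 <|
    le_csInf (hconvexHull_levels_nonempty hfb.bddAbove p) fun t ht => ?_
  refine sub_le_iff_le_add.2 (levelEnvelope_le hfb.bddBelow (mapsTo_hmul_hconvexHull ?_ ht))
  exact fun x hx => ((ha x).trans_le (add_le_add_left hx η)).le

lemma continuous_levelEnvelope (hf : Continuous f) (hS : IsCompact S)
    (hfS : ∀ x ∉ S, f x = K) : Continuous (levelEnvelope f) := by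
  refine Metric.continuous_iff'.2 fun p ε hε => ?_
  have hsmall := eventually_forall_levelEnvelope_hmul_le hf hS hfS (half_pos hε)
  have hright : Tendsto (fun q => hmul q (hinv p)) (𝓝 p) (𝓝 0) := by
    simpa [hmul_hinv_self] using (by fun_prop : Continuous fun q => hmul q (hinv p)).tendsto p
  have hleft : Tendsto (fun q => hmul p (hinv q)) (𝓝 p) (𝓝 0) := by
    simpa [hmul_hinv_self] using (by fun_prop : Continuous fun q => hmul p (hinv q)).tendsto p
  filter_upwards [hright.eventually hsmall, hleft.eventually hsmall] with q hq hq'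
  have h₁ := hq p
  have h₂ := hq' q
  rw [hmul_hinv_cancel_right] at h₁ h₂
  rw [Real.dist_eq, abs_sub_lt_iff]
  constructor <;> linarith

end Continuity

theorem level_set_hconvex_hull_bounded_general
    (E : Set Heis)
    (R : ℝ) (hR : 0 < R) (hco : closure (hconvexHull E) ⊆ gball (0 : Heis) R)
    (f : Heis → ℝ) (hf : Continuous f) (hE : E = {p : Heis | f p < 0})
    (K : ℝ) (hfK : ∀ p ∉ gball (0 : Heis) R, f p = K)
    (Qf : Heis → ℝ) (hQf : IsHQCEnvelopeOn Set.univ f Qf) :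
    Continuous Qf ∧
    (∀ p ∉ gball (0 : Heis) R, Qf p = K) ∧
    hconvexHull E = {p : Heis | p ∈ gball (0 : Heis) R ∧ Qf p < 0} := by
  have hS : IsCompact (closure (gball (0 : Heis) R)) := (isBounded_gball hR).isCompact_closure
  have hfS : ∀ p ∉ closure (gball (0 : Heis) R), f p = K := fun p hp =>
    hfK p fun h => hp (subset_closure h)
  have hfb := isBounded_range_of_eq_off_isCompact hf hS hfS
  have hlevel := hconvexHull_setOf_lt hfb.bddBelow hfb.bddAbove
  obtain rfl : Qf = levelEnvelope f := funext fun p =>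
    hQf.eqOn (isHQCEnvelopeOn_levelEnvelope hfb.bddBelow hfb.bddAbove) trivial
  refine ⟨continuous_levelEnvelope hf hS hfS, fun p hp => ?_, ?_⟩
  · have hK : {x | f x < K} ⊆ gball 0 R := fun x hx =>
      by_contra fun h => (hfK x h ▸ hx : K < K).false
    refine le_antisymm ((levelEnvelope_le_self hfb.bddBelow p).trans (hfK p hp).le) ?_
    exact not_lt.1 fun hlt => hp (hconvexHull_min (isHConvex_gball hR) hK (hlevel K ▸ hlt))
  · subst hE
    ext p
    rw [hlevel 0]
    exact ⟨fun hp => ⟨hco (subset_closure (hlevel 0 ▸ hp)), hp⟩, And.right⟩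

/-- Theorem 5.2 (Level set method for the h-convex hull): for a bounded open
set `E`, with `Ω = B_R(0)` containing `co(E)` compactly and a defining function
`f` that equals `K > 0` outside `B_R(0)`, the h-quasiconvex envelope `Q(f)` is
continuous, equals `K` outside `B_R(0)`, and `co(E) = {p ∈ Ω : Q(f)(p) < 0}`. -/
theorem level_set_hconvex_hull_bounded
    (E : Set Heis) (hEb : Bornology.IsBounded E) (hEo : IsOpen E)
    (R : ℝ) (hR : 0 < R) (hco : closure (hconvexHull E) ⊆ gball (0 : Heis) R)
    (f : Heis → ℝ) (hf : Continuous f) (hE : E = {p : Heis | f p < 0})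
    (K : ℝ) (hK : 0 < K) (hfK : ∀ p ∉ gball (0 : Heis) R, f p = K)
    (Qf : Heis → ℝ) (hQf : IsHQCEnvelopeOn Set.univ f Qf) :
    Continuous Qf ∧
    (∀ p ∉ gball (0 : Heis) R, Qf p = K) ∧
    hconvexHull E = {p : Heis | p ∈ gball (0 : Heis) R ∧ Qf p < 0} :=
  level_set_hconvex_hull_bounded_general E R hR hco f hf hE K hfK Qf hQf
end
end
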